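/- (Cassini's identity for bicomplex Pell numbers) For every integer n, BP(n−1)·BP(n+1) − BP(n)² = 12·(−1)^n·(j + ij). -/

import Mathlib

open scoped TensorProduct

noncomputable def bi : ℂ ⊗[ℝ] ℂ := Complex.I ⊗ₜ[ℝ] 1
noncomputable def bj : ℂ ⊗[ℝ] ℂ := (1 : ℂ) ⊗ₜ[ℝ] Complex.I
noncomputable def bij : ℂ ⊗[ℝ] ℂ := Complex.I ⊗ₜ[ℝ] Complex.I

/-- The bicomplex Pell number `BP n = P n + P (n+1) i + P (n+2) j + P (n+3) ij`. -/
noncomputable def BP (P : ℤ → ℤ) (n : ℤ) : ℂ ⊗[ℝ] ℂ :=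
  (P n : ℝ) • (1 : ℂ ⊗[ℝ] ℂ) + (P (n + 1) : ℝ) • bi + (P (n + 2) : ℝ) • bj +
    (P (n + 3) : ℝ) • bij


/-!
Any sequence `s` with `s (n + 2) = a * s (n + 1) + s n` in a commutative ring has an antiperiodic
Cassini defect `s (n - 1) * s (n + 1) - s n ^ 2`. The bicomplex Pell numbers form such a sequence,
being ℝ-linear in the Pell numbers, so the defect is `(-1) ^ n` times its value at `n = 0`, which is
`BP (-1) * BP 1 - BP 0 ^ 2 = (1 + j + 2ij)(1 + 2i + 5j + 12ij) - (i + 2j + 5ij)² = 12 (j + ij)`.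
-/

section Recurrence

variable {R : Type*} [CommRing R] {s : ℤ → R} {a : R}

theorem cassini_antiperiodic_of_add_two_eq (hs : ∀ n, s (n + 2) = a * s (n + 1) + s n) :
    Function.Antiperiodic (fun n ↦ s (n - 1) * s (n + 1) - s n ^ 2) 1 := by
  intro n
  have hprev : s (n - 1) = s (n + 1) - a * s n := by
    have h := hs (n - 1)
    rw [sub_add_cancel, show n - 1 + 2 = n + 1 by ring] at h
    exact eq_sub_of_add_eq' h.symm
  simp only [add_sub_cancel_right, add_assoc, one_add_one_eq_two, hs n, hprev]
  ring

theorem cassini_eq_negOnePow_smul_of_add_two_eq (hs : ∀ n, s (n + 2) = a * s (n + 1) + s n)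
    (n : ℤ) :
    s (n - 1) * s (n + 1) - s n ^ 2 = (n.negOnePow : ℤ) • (s (-1) * s 1 - s 0 ^ 2) := by
  simpa using (cassini_antiperiodic_of_add_two_eq hs).add_zsmul_eq (x := 0) n

end Recurrence

theorem bi_mul_bi : bi * bi = -1 := by
  rw [bi, Algebra.TensorProduct.tmul_mul_tmul, Complex.I_mul_I, one_mul,
    TensorProduct.neg_tmul, Algebra.TensorProduct.one_def]

theorem bj_mul_bj : bj * bj = -1 := by
  rw [bj, Algebra.TensorProduct.tmul_mul_tmul, Complex.I_mul_I, one_mul,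
    TensorProduct.tmul_neg, Algebra.TensorProduct.one_def]

theorem bi_mul_bj : bi * bj = bij := by
  rw [bi, bj, bij, Algebra.TensorProduct.tmul_mul_tmul, one_mul, mul_one]

theorem BP_add_two {P : ℤ → ℤ} {a : ℤ} (hP : ∀ n, P (n + 2) = a * P (n + 1) + P n) (n : ℤ) :
    BP P (n + 2) = a * BP P (n + 1) + BP P n := by
  have h (k : ℤ) : P (n + 2 + k) = a * P (n + 1 + k) + P (n + k) := by
    rw [add_right_comm, hP, add_right_comm, add_right_comm n 1]
  simp only [BP, hP n, h 1, h 2, h 3]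
  rw [← zsmul_eq_mul]
  push_cast
  module

theorem cassini_BP_zero {P : ℤ → ℤ} (hP : ∀ n, P (n + 2) = 2 * P (n + 1) + P n) (hP0 : P 0 = 0)
    (hP1 : P 1 = 1) : BP P (-1) * BP P 1 - BP P 0 ^ 2 = (12 : ℝ) • (bj + bij) := by
  have hm1 : P (-1) = 1 := by simpa [hP0, hP1, eq_comm] using hP (-1)
  have h2 : P 2 = 2 := by simpa [hP0, hP1] using hP 0
  have h3 : P 3 = 5 := by simpa [h2, hP1] using hP 1
  have h4 : P 4 = 12 := by simpa [h3, h2] using hP 2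
  norm_num [BP, hm1, hP0, hP1, h2, h3, h4, ← bi_mul_bj, ofNat_smul_eq_nsmul, nsmul_eq_mul]
  -- the coefficients are the quotients of the difference of the two sides by `i² + 1` and `j² + 1`
  linear_combination (-6 * bj - bj ^ 2 - 1) * bi_mul_bi + (2 + 2 * bi) * bj_mul_bj

theorem bicomplexPell_cassini (P : ℤ → ℤ)
    (hP : ∀ n : ℤ, P (n + 2) = 2 * P (n + 1) + P n) (hP0 : P 0 = 0) (hP1 : P 1 = 1)
    (n : ℤ) :
    BP P (n - 1) * BP P (n + 1) - BP P n ^ 2 =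
      (12 * (-1 : ℝ) ^ n) • (bj + bij) := by
  rw [cassini_eq_negOnePow_smul_of_add_two_eq (BP_add_two hP) n, cassini_BP_zero hP hP0 hP1,
    ← Int.cast_smul_eq_zsmul ℝ, smul_smul, Int.cast_negOnePow, mul_comm]
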